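/- arXiv:1101.4887 — 6 statements merged into one kernel-verified Lean document; each statement's English description precedes it below -/
import Mathlib

section
/- Let f be a non-vanishing log-concave probability density on ℝ with cumulative distribution function J(t) = ∫_{-∞}^t f(s) ds. Then the function u(t) = -log(1 - J(t)) is convex on ℝ. -/
/-!
The survival function `S t = ∫_{(t,∞)} f = 1 - J t` has derivative `-f`, so `-log S` has
derivative the hazard rate `f / S`, and it suffices that the hazard rate is nondecreasing.
Since `S (x + c) = ∫_{(x,∞)} f (s + c) ds`, this reduces to the pointwise inequality
`f x * f (s + c) ≤ f (x + c) * f s` for `x ≤ s` and `0 ≤ c`, which after taking logarithms says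
that the increments `g (x + c) - g x` of the convex function `g` are nondecreasing in `x`.
-/

open MeasureTheory Set Real

lemma ConvexOn.monotone_map_add_sub_map {g : ℝ → ℝ} (hg : ConvexOn ℝ univ g) {c : ℝ}
    (hc : 0 ≤ c) : Monotone fun x => g (x + c) - g x := by
  intro x y hxy
  rcases hc.eq_or_lt with rfl | hc
  · simp
  have h₁ : slope g x (x + c) ≤ slope g x (y + c) :=
    hg.slope_mono (mem_univ x) ⟨mem_univ _, (by linarith : x < x + c).ne'⟩
      ⟨mem_univ _, (by linarith : x < y + c).ne'⟩ (by linarith)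
  have h₂ : slope g (y + c) x ≤ slope g (y + c) y :=
    hg.slope_mono (mem_univ _) ⟨mem_univ _, (by linarith : x < y + c).ne⟩
      ⟨mem_univ _, (by linarith : y < y + c).ne⟩ hxy
  have := h₁.trans (slope_comm g x (y + c) ▸ h₂)
  rw [slope_comm g (y + c) y, slope_def_field, slope_def_field, add_sub_cancel_left,
    add_sub_cancel_left] at this
  exact (div_le_div_iff_of_pos_right hc).1 this

lemma integral_Ioi_comp_add_right {E : Type*} [NormedAddCommGroup E] [NormedSpace ℝ E]
    (f : ℝ → E) (a c : ℝ) : ∫ s in Ioi a, f (s + c) = ∫ s in Ioi (a + c), f s := by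
  simpa using (measurePreserving_add_right volume c).setIntegral_preimage_emb
    (measurableEmbedding_addRight c) f (Ioi (a + c))

lemma integral_Ioi_pos_of_pos {f : ℝ → ℝ} (hpos : ∀ t, 0 < f t) (hf : Integrable f) (a : ℝ) :
    0 < ∫ s in Ioi a, f s := by
  rw [setIntegral_pos_iff_support_of_nonneg_ae (.of_forall fun s => (hpos s).le) hf.integrableOn,
    Function.support_eq_univ fun s => (hpos s).ne', univ_inter]
  simp

lemma hasDerivAt_integral_Ioi {f : ℝ → ℝ} (hc : Continuous f) (hf : Integrable f) (t : ℝ) :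
    HasDerivAt (fun a => ∫ s in Ioi a, f s) (-f t) t := by
  have h : (fun a => ∫ s in Ioi a, f s) = fun a => (∫ s in Ioi 0, f s) - ∫ s in 0..a, f s := by
    funext a
    rw [← intervalIntegral.integral_Ioi_sub_Ioi' hf.integrableOn hf.integrableOn, sub_sub_cancel]
  rw [h]
  exact (hc.integral_hasStrictDerivAt 0 t).hasDerivAt.const_sub _

lemma monotone_div_integral_Ioi_of_convexOn {f g : ℝ → ℝ} (hg : ConvexOn ℝ univ g)
    (hf : ∀ t, f t = exp (-g t)) (hint : Integrable f) :
    Monotone fun t => f t / ∫ s in Ioi t, f s := by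
  have hpos : ∀ t, 0 < f t := fun t => hf t ▸ exp_pos _
  intro x y hxy
  obtain ⟨c, hc, rfl⟩ : ∃ c, 0 ≤ c ∧ y = x + c := ⟨y - x, by linarith, by ring⟩
  rw [div_le_div_iff₀ (integral_Ioi_pos_of_pos hpos hint x) (integral_Ioi_pos_of_pos hpos hint _),
    ← integral_Ioi_comp_add_right, ← integral_const_mul, ← integral_const_mul]
  refine setIntegral_mono_on ((hint.comp_add_right c).const_mul _).integrableOn
    (hint.const_mul _).integrableOn measurableSet_Ioi fun s hs => ?_
  rw [hf, hf, hf, hf, ← exp_add, ← exp_add, exp_le_exp]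
  linarith [hg.monotone_map_add_sub_map hc (le_of_lt hs)]

lemma convexOn_neg_log_integral_Ioi {f g : ℝ → ℝ} (hg : ConvexOn ℝ univ g)
    (hf : ∀ t, f t = exp (-g t)) (hint : Integrable f) :
    ConvexOn ℝ univ fun t => -log (∫ s in Ioi t, f s) := by
  have hpos : ∀ t, 0 < f t := fun t => hf t ▸ exp_pos _
  have hc : Continuous f := funext hf ▸ hg.locallyLipschitz.continuous.neg.rexp
  have hderiv : ∀ t, HasDerivAt (fun t => -log (∫ s in Ioi t, f s)) (f t / ∫ s in Ioi t, f s) t :=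
    fun t => by
      have h := ((hasDerivAt_integral_Ioi hc hint t).log
        (integral_Ioi_pos_of_pos hpos hint t).ne').neg
      rwa [neg_div, neg_neg] at h
  refine Monotone.convexOn_univ_of_deriv (fun t => (hderiv t).differentiableAt) ?_
  rw [funext fun t => (hderiv t).deriv]
  exact monotone_div_integral_Ioi_of_convexOn hg hf hint

theorem stmt0 (f g : ℝ → ℝ) (hg : ConvexOn ℝ Set.univ g)
    (hf : ∀ t, f t = Real.exp (-g t))
    (hint : ∫ s, f s = 1)
    (J : ℝ → ℝ) (hJ : ∀ t, J t = ∫ s in Set.Iic t, f s) :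
    ConvexOn ℝ Set.univ (fun t => -Real.log (1 - J t)) := by
  have hf_int : Integrable f := integrable_of_integral_eq_one hint
  have hsurvival : ∀ t, 1 - J t = ∫ s in Ioi t, f s := fun t => by
    rw [← hint, hJ, ← integral_add_compl measurableSet_Iic hf_int, compl_Iic, add_sub_cancel_left]
  simp only [hsurvival]
  exact convexOn_neg_log_integral_Ioi hg hf hf_int
end

section
/- Let f be a log-concave probability density on ℝ of class C², f = e^{-g} with g convex, with cumulative distribution J. Then the function ψ(t) = f(J^{-1}(1-t)) is concave on (0,1). -/
/-!
Write `ψ(t) = f(J⁻¹(1 - t))`. By the inverse function rule `(J⁻¹)' = 1 / f ∘ J⁻¹`, and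
`f' = -g' f`, so the chain rule gives `ψ'(t) = g'(J⁻¹(1 - t))`: the density cancels. Since `g`
is convex, `g'` is nondecreasing, and `t ↦ J⁻¹(1 - t)` is decreasing, so `ψ'` is nonincreasing
and `ψ` is concave.
-/

open MeasureTheory Set

theorem setIntegral_pos_of_forall_pos {X : Type*} [MeasurableSpace X] {μ : Measure X}
    {f : X → ℝ} {s : Set X} (hs : MeasurableSet s) (hμs : μ s ≠ 0) (hfi : IntegrableOn f s μ)
    (hf : ∀ x ∈ s, 0 < f x) : 0 < ∫ x in s, f x ∂μ := by
  have hsupp : Function.support f ∩ s = s := inter_eq_right.2 fun x hx => (hf x hx).ne'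
  rw [setIntegral_pos_iff_support_of_nonneg_ae
    (ae_restrict_of_forall_mem hs fun x hx => (hf x hx).le) hfi, hsupp]
  exact pos_iff_ne_zero.2 hμs

theorem concaveOn_of_hasDerivAt_of_antitoneOn {D : Set ℝ} (hDo : IsOpen D) (hDc : Convex ℝ D)
    {f f' : ℝ → ℝ} (hf : ∀ x ∈ D, HasDerivAt f (f' x) x) (hf' : AntitoneOn f' D) :
    ConcaveOn ℝ D f := by
  have hdiff : DifferentiableOn ℝ f D := fun x hx =>
    (hf x hx).differentiableAt.differentiableWithinAt
  refine AntitoneOn.concaveOn_of_deriv hDc hdiff.continuousOn ?_ ?_ <;> rw [hDo.interior_eq]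
  · exact hdiff
  · exact hf'.congr fun x hx => (hf x hx).deriv.symm

section CumulativeDistribution

variable {f : ℝ → ℝ}

theorem strictMono_integral_Iic (hfi : Integrable f) (hf : ∀ x, 0 < f x) :
    StrictMono fun t => ∫ s in Iic t, f s := fun a b hab => by
  have hpos : 0 < ∫ x in a..b, f x :=
    intervalIntegral.intervalIntegral_pos_of_pos hfi.intervalIntegrable hf hab
  have := intervalIntegral.integral_Iic_sub_Iic hfi.integrableOn hfi.integrableOn (a := a) (b := b)
  dsimp only
  linarith

theorem integral_Iic_mem_Ioo (hfi : Integrable f) (hf : ∀ x, 0 < f x) (hf1 : ∫ s, f s = 1)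
    (t : ℝ) : ∫ s in Iic t, f s ∈ Ioo 0 1 := by
  have hIic := setIntegral_pos_of_forall_pos (s := Iic t) measurableSet_Iic (by simp)
    hfi.integrableOn fun x _ => hf x
  have hIoi := setIntegral_pos_of_forall_pos (s := Ioi t) measurableSet_Ioi (by simp)
    hfi.integrableOn fun x _ => hf x
  have hsum := intervalIntegral.integral_Iic_add_Ioi hfi.integrableOn hfi.integrableOn (b := t)
  exact ⟨hIic, by linarith⟩

theorem hasDerivAt_integral_Iic (hfi : Integrable f) {t : ℝ} (hft : ContinuousAt f t) :
    HasDerivAt (fun u => ∫ s in Iic u, f s) (f t) t := by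
  have hright : HasDerivAt (fun u => (∫ x in (0 : ℝ)..u, f x) + ∫ s in Iic 0, f s) (f t) t :=
    (intervalIntegral.integral_hasDerivAt_right hfi.intervalIntegrable
      hfi.aestronglyMeasurable.stronglyMeasurableAtFilter hft).add_const _
  refine hright.congr_of_eventuallyEq (Filter.Eventually.of_forall fun u => ?_)
  have := intervalIntegral.integral_Iic_sub_Iic hfi.integrableOn hfi.integrableOn (a := 0) (b := u)
  dsimp only
  linarith

end CumulativeDistribution

section RightInverse

variable {J Jinv : ℝ → ℝ} {s : Set ℝ}

theorem StrictMono.strictMonoOn_of_rightInvOn (hJ : StrictMono J) (h : RightInvOn Jinv J s) :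
    StrictMonoOn Jinv s := fun a ha b hb hab =>
  hJ.lt_iff_lt.1 (by rwa [h ha, h hb])

theorem StrictMono.image_eq_univ_of_rightInvOn (hJ : StrictMono J) (h : RightInvOn Jinv J s)
    (hJs : ∀ t, J t ∈ s) : Jinv '' s = univ :=
  eq_univ_of_forall fun t => ⟨J t, hJs t, hJ.injective (h (hJs t))⟩

theorem StrictMono.hasDerivAt_of_rightInvOn (hJ : StrictMono J) (h : RightInvOn Jinv J s)
    (hs : IsOpen s) (hJs : ∀ t, J t ∈ s) {y J' : ℝ} (hy : y ∈ s)
    (hder : HasDerivAt J J' (Jinv y)) (hJ' : J' ≠ 0) : HasDerivAt Jinv J'⁻¹ y := by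
  have hcont : ContinuousAt Jinv y :=
    (hJ.strictMonoOn_of_rightInvOn h).continuousAt_of_image_mem_nhds (hs.mem_nhds hy)
      (by rw [hJ.image_eq_univ_of_rightInvOn h hJs]; exact Filter.univ_mem)
  exact hder.of_local_left_inverse hcont hJ' (Filter.eventually_of_mem (hs.mem_nhds hy) h)

end RightInverse

theorem hasDerivAt_exp_neg_comp_reflect {g Jinv : ℝ → ℝ} {t : ℝ}
    (hg : DifferentiableAt ℝ g (Jinv (1 - t)))
    (hJinv : HasDerivAt Jinv (Real.exp (-g (Jinv (1 - t))))⁻¹ (1 - t)) :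
    HasDerivAt (fun t => Real.exp (-g (Jinv (1 - t)))) (deriv g (Jinv (1 - t))) t := by
  have hreflect : HasDerivAt (fun u : ℝ => 1 - u) (-1) t := by
    simpa using (hasDerivAt_id t).const_sub 1
  have hchain := (hg.hasDerivAt.neg.exp.comp (1 - t) hJinv).comp t hreflect
  refine hchain.congr_deriv ?_
  simp only [Pi.neg_apply]
  field_simp

theorem stmt1_general (f g : ℝ → ℝ) (hg : ConvexOn ℝ Set.univ g)
    (hg2 : ContDiff ℝ 2 g)
    (hf : ∀ t, f t = Real.exp (-g t))
    (hint : ∫ s, f s = 1)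
    (J : ℝ → ℝ) (hJ : ∀ t, J t = ∫ s in Set.Iic t, f s)
    (Jinv : ℝ → ℝ)
    (hJinv₁ : ∀ y ∈ Set.Ioo (0:ℝ) 1, J (Jinv y) = y) :
    ConcaveOn ℝ (Set.Ioo 0 1) (fun t => f (Jinv (1 - t))) := by
  obtain rfl : f = fun t => Real.exp (-g t) := funext hf
  obtain rfl : J = fun t => ∫ s in Iic t, Real.exp (-g s) := funext hJ
  have hgd : Differentiable ℝ g := hg2.differentiable (by norm_num)
  have hpos : ∀ x, 0 < Real.exp (-g x) := fun x => Real.exp_pos _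
  have hfi : Integrable fun x => Real.exp (-g x) := Integrable.of_integral_ne_zero (by simp [hint])
  have hJmono := strictMono_integral_Iic hfi hpos
  have hJinv_mono := hJmono.strictMonoOn_of_rightInvOn hJinv₁
  have hreflect : ∀ t ∈ Ioo (0 : ℝ) 1, 1 - t ∈ Ioo (0 : ℝ) 1 := fun t ht =>
    ⟨by linarith [ht.2], by linarith [ht.1]⟩
  refine concaveOn_of_hasDerivAt_of_antitoneOn isOpen_Ioo (convex_Ioo 0 1)
    (fun t ht => hasDerivAt_exp_neg_comp_reflect (hgd _) ?_) ?_
  · exact hJmono.hasDerivAt_of_rightInvOn hJinv₁ isOpen_Ioo (integral_Iic_mem_Ioo hfi hpos hint)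
      (hreflect t ht) (hasDerivAt_integral_Iic hfi hgd.continuous.neg.rexp.continuousAt)
      (hpos _).ne'
  · intro a ha b hb hab
    exact hg.monotoneOn_deriv (fun x _ => hgd x) (mem_univ _) (mem_univ _)
      (hJinv_mono.monotoneOn (hreflect b hb) (hreflect a ha) (by linarith))

theorem stmt1 (f g : ℝ → ℝ) (hg : ConvexOn ℝ Set.univ g)
    (hg2 : ContDiff ℝ 2 g)
    (hf : ∀ t, f t = Real.exp (-g t))
    (hint : ∫ s, f s = 1)
    (J : ℝ → ℝ) (hJ : ∀ t, J t = ∫ s in Set.Iic t, f s)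
    (Jinv : ℝ → ℝ)
    (hJinv₁ : ∀ y ∈ Set.Ioo (0:ℝ) 1, J (Jinv y) = y)
    (hJinv₂ : ∀ t : ℝ, Jinv (J t) = t) :
    ConcaveOn ℝ (Set.Ioo 0 1) (fun t => f (Jinv (1 - t))) :=
  stmt1_general f g hg hg2 hf hint J hJ Jinv hJinv₁
end

section
/- Let μ be a probability measure on ℝ with non-vanishing log-concave density and cumulative distribution J, and let Eμ be its mean. Then for any real numbers a, b, n with 0 < a < b < n and log n - log b - 1 > 0, one has (J^{-1}(1-a/n) - J^{-1}(1-b/n)) / (J^{-1}(1-b/n) - Eμ) ≤ (log b - log a)/(log n - log b - 1). -/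
/-!
Let `F(t) = μ (t, ∞)` and let `u = -log F` be the cumulative hazard, so that
`J⁻¹(1 - p/n)` is the point where `u = log n - log p`. Log-concavity of the density makes the
hazard rate `u' = f / F` nondecreasing, so `u` is convex and its slope between `Eμ` and
`J⁻¹(1 - b/n)` is at most its slope between the two quantiles. For `X ~ μ` the variable `u X` is
`Exp(1)`-distributed, so Jensen's inequality gives `u (Eμ) ≤ E[u X] = 1`, which bounds the
denominator. The same two facts give the integrability of `X`: a convex `u` grows at least
linearly, and `u X` is integrable.
-/

open MeasureTheory Set Real Filter Topology

theorem ConvexOn.map_add_map_sub_le {I : Set ℝ} {g : ℝ → ℝ} (hg : ConvexOn ℝ I g)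
    {s t r : ℝ} (hs : s ∈ I) (hr : r ∈ I) (hst : s ≤ t) (htr : t ≤ r) :
    g t + g (s + r - t) ≤ g s + g r := by
  rcases (hst.trans htr).eq_or_lt with rfl | hsr
  · obtain rfl : t = s := le_antisymm htr hst
    simp
  set θ := (r - t) / (r - s)
  have hθ : θ * (r - s) = r - t := div_mul_cancel₀ _ (sub_pos.2 hsr).ne'
  have hθ0 : 0 ≤ θ := div_nonneg (sub_nonneg.2 htr) (sub_pos.2 hsr).le
  have hθ1 : θ ≤ 1 := (div_le_one (sub_pos.2 hsr)).2 (by linarith)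
  have h₁ := hg.2 hs hr hθ0 (sub_nonneg.2 hθ1) (add_sub_cancel θ 1)
  have h₂ := hg.2 hs hr (sub_nonneg.2 hθ1) hθ0 (sub_add_cancel 1 θ)
  simp only [smul_eq_mul] at h₁ h₂
  rw [show θ * s + (1 - θ) * r = t by linear_combination -hθ] at h₁
  rw [show (1 - θ) * s + θ * r = s + r - t by linear_combination hθ] at h₂
  linarith

theorem ConvexOn.sub_div_sub_le_of_monotone {u : ℝ → ℝ} (hu : ConvexOn ℝ univ u)
    (hmono : Monotone u) {x y z : ℝ} (hxy : u x < u y) (hyz : u y < u z) :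
    (z - y) / (y - x) ≤ (u z - u y) / (u y - u x) := by
  have hxy' : 0 < y - x := sub_pos.2 (hmono.reflect_lt hxy)
  have hyz' : 0 < z - y := sub_pos.2 (hmono.reflect_lt hyz)
  have h := hu.slope_mono_adjacent (mem_univ x) (mem_univ z) (hmono.reflect_lt hxy)
    (hmono.reflect_lt hyz)
  rw [div_le_div_iff₀ hxy' hyz'] at h
  rw [div_le_div_iff₀ hxy' (sub_pos.2 hxy)]
  nlinarith

theorem integrable_deriv_of_nonneg {g g' : ℝ → ℝ} {m n : ℝ}
    (hderiv : ∀ x, HasDerivAt g (g' x) x) (hg' : ∀ x, 0 ≤ g' x)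
    (hbot : Tendsto g atBot (𝓝 m)) (htop : Tendsto g atTop (𝓝 n)) : Integrable g' := by
  have hcont : Continuous g := continuous_iff_continuousAt.2 fun x => (hderiv x).continuousAt
  have hint : ∀ a b, IntervalIntegrable g' volume a b := fun a b =>
    intervalIntegral.intervalIntegrable_deriv_of_nonneg hcont.continuousOn
      (fun x _ => hderiv x) (fun x _ => hg' x)
  refine integrable_of_intervalIntegral_norm_tendsto (n - m)
    (fun i => intervalIntegral.integrableOn_deriv_of_nonneg hcont.continuousOn
      (fun x _ => hderiv x) (fun x _ => hg' x)) tendsto_neg_atTop_atBot tendsto_id ?_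
  have hnorm : ∀ i : ℝ, ∫ x in -i..id i, ‖g' x‖ = g i - g (-i) := fun i => by
    simp_rw [Real.norm_of_nonneg (hg' _)]
    exact intervalIntegral.integral_eq_sub_of_hasDerivAt (fun x _ => hderiv x) (hint _ _)
  simp_rw [hnorm]
  exact htop.sub (hbot.comp tendsto_neg_atTop_atBot)

section WithDensity

variable {α : Type*} [MeasurableSpace α] {ν : Measure α} {f : α → ℝ}

theorem measureReal_withDensity_ofReal (hf : 0 ≤ f) {s : Set α} (hs : MeasurableSet s)
    (hfi : IntegrableOn f s ν) :
    (ν.withDensity fun x => ENNReal.ofReal (f x)).real s = ∫ x in s, f x ∂ν := by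
  rw [measureReal_def, withDensity_apply _ hs, ← ofReal_integral_eq_lintegral_ofReal hfi
    (ae_of_all _ hf), ENNReal.toReal_ofReal (setIntegral_nonneg_of_ae (ae_of_all _ hf))]

theorem integrable_withDensity_ofReal_iff (hf : Measurable f) (hf0 : 0 ≤ f) {φ : α → ℝ} :
    Integrable φ (ν.withDensity fun x => ENNReal.ofReal (f x)) ↔
      Integrable (fun x => φ x * f x) ν := by
  rw [integrable_withDensity_iff hf.ennreal_ofReal (ae_of_all _ fun _ => ENNReal.ofReal_lt_top)]
  simp_rw [ENNReal.toReal_ofReal (hf0 _)]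

theorem integral_withDensity_ofReal (hf : Measurable f) (hf0 : 0 ≤ f) (φ : α → ℝ) :
    ∫ x, φ x ∂(ν.withDensity fun x => ENNReal.ofReal (f x)) = ∫ x, φ x * f x ∂ν := by
  rw [integral_withDensity_eq_integral_toReal_smul hf.ennreal_ofReal
    (ae_of_all _ fun _ => ENNReal.ofReal_lt_top)]
  simp_rw [ENNReal.toReal_ofReal (hf0 _), smul_eq_mul, mul_comm]

theorem integrable_and_integral_eq_one_of_isProbabilityMeasure (hf : Measurable f) (hf0 : 0 ≤ f)
    [IsProbabilityMeasure (ν.withDensity fun x => ENNReal.ofReal (f x))] :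
    Integrable f ν ∧ ∫ x, f x ∂ν = 1 := by
  have hmass : ∫⁻ x, ENNReal.ofReal (f x) ∂ν = 1 := by
    rw [← setLIntegral_univ, ← withDensity_apply _ MeasurableSet.univ, measure_univ]
  refine ⟨⟨hf.aestronglyMeasurable, ?_⟩, ?_⟩
  · rw [hasFiniteIntegral_iff_ofReal (ae_of_all _ hf0), hmass]
    exact ENNReal.one_lt_top
  · rw [integral_eq_lintegral_of_nonneg_ae (ae_of_all _ hf0) hf.aestronglyMeasurable, hmass,
      ENNReal.toReal_one]

end WithDensity

noncomputable def tailIntegral (f : ℝ → ℝ) (t : ℝ) : ℝ := ∫ x in Ioi t, f x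

noncomputable def cumulativeHazard (f : ℝ → ℝ) (t : ℝ) : ℝ := -log (tailIntegral f t)

section TailIntegral

variable {f : ℝ → ℝ}

theorem hasDerivAt_tailIntegral (hf : Continuous f) (hfi : Integrable f) (t : ℝ) :
    HasDerivAt (tailIntegral f) (-f t) t := by
  have hrepr : (fun x => tailIntegral f 0 - ∫ y in (0:ℝ)..x, f y) = tailIntegral f := by
    funext x
    rw [tailIntegral, tailIntegral, ← intervalIntegral.integral_Ioi_sub_Ioi' hfi.integrableOn
      hfi.integrableOn]
    ring
  rw [← hrepr]
  exact ((hf.integral_hasStrictDerivAt 0 t).hasDerivAt).const_sub _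

theorem tendsto_tailIntegral_atTop : Tendsto (tailIntegral f) atTop (𝓝 0) :=
  tendsto_integral_Ioi_zero tendsto_id

theorem tendsto_tailIntegral_atBot (hfi : Integrable f) :
    Tendsto (tailIntegral f) atBot (𝓝 (∫ x, f x)) := by
  have hrepr : (fun t => (∫ x, f x) - ∫ x in Iic t, f x) = tailIntegral f := by
    funext t
    rw [tailIntegral, ← intervalIntegral.integral_Iic_add_Ioi hfi.integrableOn hfi.integrableOn]
    ring
  rw [← hrepr]
  simpa using (tendsto_integral_Iic_zero tendsto_id).const_sub (∫ x, f x)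

theorem tailIntegral_pos (hfi : Integrable f) (hpos : ∀ x, 0 < f x)
    (t : ℝ) : 0 < tailIntegral f t := by
  rw [tailIntegral, setIntegral_pos_iff_support_of_nonneg_ae (ae_of_all _ fun x => (hpos x).le)
    hfi.integrableOn]
  simp [Function.support, (hpos _).ne']

theorem tailIntegral_le_integral (hfi : Integrable f) (hf0 : 0 ≤ f) (t : ℝ) :
    tailIntegral f t ≤ ∫ x, f x :=
  setIntegral_le_integral hfi (ae_of_all _ hf0)

theorem tailIntegral_eq_one_sub_measureReal_Iic (hf0 : 0 ≤ f) (hfi : Integrable f)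
    [IsProbabilityMeasure (volume.withDensity fun x => ENNReal.ofReal (f x))] (t : ℝ) :
    tailIntegral f t = 1 - (volume.withDensity fun x => ENNReal.ofReal (f x)).real (Iic t) := by
  rw [tailIntegral, ← measureReal_withDensity_ofReal hf0 measurableSet_Ioi hfi.integrableOn,
    ← compl_Iic, measureReal_compl measurableSet_Iic, probReal_univ]

end TailIntegral

section CumulativeHazard

variable {f : ℝ → ℝ}

theorem hasDerivAt_cumulativeHazard (hf : Continuous f) (hfi : Integrable f)
    (hpos : ∀ x, 0 < f x) (t : ℝ) :
    HasDerivAt (cumulativeHazard f) (f t / tailIntegral f t) t := by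
  have h := ((hasDerivAt_tailIntegral hf hfi t).log (tailIntegral_pos hfi hpos t).ne').neg
  rwa [neg_div, neg_neg] at h

theorem strictMono_cumulativeHazard (hf : Continuous f) (hfi : Integrable f)
    (hpos : ∀ x, 0 < f x) : StrictMono (cumulativeHazard f) :=
  strictMono_of_hasDerivAt_pos (hasDerivAt_cumulativeHazard hf hfi hpos)
    fun t => div_pos (hpos t) (tailIntegral_pos hfi hpos t)

theorem cumulativeHazard_nonneg (hfi : Integrable f) (hpos : ∀ x, 0 < f x)
    (hmass : ∫ x, f x ≤ 1) (t : ℝ) : 0 ≤ cumulativeHazard f t :=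
  neg_nonneg.2 <| log_nonpos (tailIntegral_pos hfi hpos t).le
    ((tailIntegral_le_integral hfi (fun x => (hpos x).le) t).trans hmass)

/-- Under the density `f`, the cumulative hazard is `Exp(1)`-distributed; in particular its mean
is `1`. -/
theorem integrable_and_integral_cumulativeHazard_mul (hf : Continuous f) (hfi : Integrable f)
    (hpos : ∀ x, 0 < f x) (hmass : ∫ x, f x = 1) :
    Integrable (fun x => cumulativeHazard f x * f x) ∧
      ∫ x, cumulativeHazard f x * f x = 1 := by
  set ψ : ℝ → ℝ := fun y => -negMulLog y - y
  have hψ : ∀ y ≠ 0, HasDerivAt ψ (log y) y := fun y hy =>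
    ((hasDerivAt_negMulLog hy).neg.sub (hasDerivAt_id y)).congr_deriv (by ring)
  have hderiv : ∀ x, HasDerivAt (ψ ∘ tailIntegral f) (cumulativeHazard f x * f x) x := fun x =>
    ((hψ _ (tailIntegral_pos hfi hpos x).ne').comp x
      (hasDerivAt_tailIntegral hf hfi x)).congr_deriv (by rw [cumulativeHazard]; ring)
  have hcont : Continuous ψ := by fun_prop
  have hbot : Tendsto (ψ ∘ tailIntegral f) atBot (𝓝 (-1)) := by
    simpa [ψ] using (hcont.tendsto 1).comp (hmass ▸ tendsto_tailIntegral_atBot hfi)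
  have htop : Tendsto (ψ ∘ tailIntegral f) atTop (𝓝 0) := by
    simpa [ψ] using (hcont.tendsto 0).comp tendsto_tailIntegral_atTop
  have hint := integrable_deriv_of_nonneg hderiv
    (fun x => mul_nonneg (cumulativeHazard_nonneg hfi hpos hmass.le x) (hpos x).le) hbot htop
  refine ⟨hint, ?_⟩
  rw [integral_of_hasDerivAt_of_tendsto hderiv hint hbot htop]
  norm_num

end CumulativeHazard

theorem setIntegral_Ioi_comp_add_right {E : Type*} [NormedAddCommGroup E] [NormedSpace ℝ E]
    (f : ℝ → E) (t c : ℝ) : ∫ x in Ioi t, f (x + c) = ∫ x in Ioi (t + c), f x := by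
  have h := (measurePreserving_add_right volume c).setIntegral_preimage_emb
    (measurableEmbedding_addRight c) f (Ioi (t + c))
  rwa [preimage_add_const_Ioi, add_sub_cancel_right] at h

section LogConcave

variable {g : ℝ → ℝ}

theorem monotone_exp_neg_div_tailIntegral (hg : ConvexOn ℝ univ g)
    (hfi : Integrable fun x => exp (-g x)) :
    Monotone fun t => exp (-g t) / tailIntegral (fun x => exp (-g x)) t := by
  intro s t hst
  have hpt : ∀ r ∈ Ioi t, exp (-g s) * exp (-g r) ≤ exp (-g t) * exp (-g (r + (s - t))) :=
    fun r hr => by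
      rw [← exp_add, ← exp_add, exp_le_exp]
      have := hg.map_add_map_sub_le (mem_univ s) (mem_univ r) hst (le_of_lt hr)
      rw [show s + r - t = r + (s - t) by ring] at this
      linarith
  rw [div_le_div_iff₀ (tailIntegral_pos hfi (fun x => exp_pos _) s)
    (tailIntegral_pos hfi (fun x => exp_pos _) t)]
  calc exp (-g s) * tailIntegral (fun x => exp (-g x)) t
      = ∫ r in Ioi t, exp (-g s) * exp (-g r) := (integral_const_mul _ _).symm
    _ ≤ ∫ r in Ioi t, exp (-g t) * exp (-g (r + (s - t))) :=
        setIntegral_mono_on (hfi.integrableOn.const_mul _)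
          ((hfi.comp_add_right (s - t)).integrableOn.const_mul _) measurableSet_Ioi hpt
    _ = exp (-g t) * tailIntegral (fun x => exp (-g x)) s := by
        rw [integral_const_mul, setIntegral_Ioi_comp_add_right (fun x => exp (-g x)),
          add_sub_cancel, tailIntegral]

theorem convexOn_cumulativeHazard (hg : ConvexOn ℝ univ g)
    (hfi : Integrable fun x => exp (-g x)) :
    ConvexOn ℝ univ (cumulativeHazard fun x => exp (-g x)) := by
  have hgc : Continuous g := continuousOn_univ.1 (hg.continuousOn isOpen_univ)
  have hderiv := hasDerivAt_cumulativeHazard (by fun_prop) hfi fun x => exp_pos (-g x)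
  refine Monotone.convexOn_univ_of_deriv (fun t => (hderiv t).differentiableAt) ?_
  rw [show deriv _ = _ from funext fun t => (hderiv t).deriv]
  exact monotone_exp_neg_div_tailIntegral hg hfi

/-- Convexity gives `u'(0) * max x 0 ≤ u x` for the cumulative hazard `u`, which is integrable
against the density. -/
theorem integrable_max_zero_mul_exp_neg (hg : ConvexOn ℝ univ g)
    (hfi : Integrable fun x => exp (-g x)) (hmass : ∫ x, exp (-g x) = 1) :
    Integrable fun x => max x 0 * exp (-g x) := by
  set f := fun x => exp (-g x)
  have hgc : Continuous g := continuousOn_univ.1 (hg.continuousOn isOpen_univ)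
  have hpos : ∀ x, 0 < f x := fun x => exp_pos _
  have hderiv := hasDerivAt_cumulativeHazard (by fun_prop) hfi hpos 0
  have hrate : 0 < f 0 / tailIntegral f 0 := div_pos (hpos 0) (tailIntegral_pos hfi hpos 0)
  have hlin : ∀ x, f 0 / tailIntegral f 0 * max x 0 ≤ cumulativeHazard f x := fun x => by
    rcases le_or_gt x 0 with hx | hx
    · simpa [max_eq_right hx] using cumulativeHazard_nonneg hfi hpos hmass.le x
    · have h := (convexOn_cumulativeHazard hg hfi).le_slope_of_hasDerivAt (mem_univ 0)
        (mem_univ x) hx hderiv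
      rw [slope_def_field, sub_zero, le_div_iff₀ hx] at h
      rw [max_eq_left hx.le]
      linarith [cumulativeHazard_nonneg hfi hpos hmass.le 0]
  have hui := (integrable_and_integral_cumulativeHazard_mul (by fun_prop) hfi hpos hmass).1
  refine (hui.const_mul (f 0 / tailIntegral f 0)⁻¹).mono' (by fun_prop) (ae_of_all _ fun x => ?_)
  rw [norm_mul, Real.norm_of_nonneg (le_max_right x 0), Real.norm_of_nonneg (hpos x).le,
    ← mul_assoc]
  gcongr
  rw [le_inv_mul_iff₀ hrate]
  exact hlin x

theorem integrable_mul_exp_neg (hg : ConvexOn ℝ univ g)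
    (hfi : Integrable fun x => exp (-g x)) (hmass : ∫ x, exp (-g x) = 1) :
    Integrable fun x => x * exp (-g x) := by
  have hright := integrable_max_zero_mul_exp_neg hg hfi hmass
  have hmass' : ∫ x, exp (-g (-x)) = 1 := (integral_neg_eq_self _ volume).trans hmass
  have hleft := (integrable_max_zero_mul_exp_neg (hg.comp_linearMap (-LinearMap.id))
    hfi.comp_neg hmass').comp_neg
  simp only [LinearMap.neg_apply, LinearMap.id_apply, Function.comp_apply, neg_neg] at hleft
  convert hright.sub hleft using 1
  ext x
  rw [Pi.sub_apply, ← sub_mul, max_zero_sub_max_neg_zero_eq_self]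

theorem cumulativeHazard_integral_id_le_one (hg : ConvexOn ℝ univ g)
    [IsProbabilityMeasure (volume.withDensity fun x => ENNReal.ofReal (exp (-g x)))] :
    cumulativeHazard (fun x => exp (-g x))
      (∫ x, x ∂volume.withDensity fun x => ENNReal.ofReal (exp (-g x))) ≤ 1 := by
  have hgc : Continuous g := continuousOn_univ.1 (hg.continuousOn isOpen_univ)
  have hf0 : 0 ≤ fun x => exp (-g x) := fun x => (exp_pos _).le
  obtain ⟨hfi, hmass⟩ := integrable_and_integral_eq_one_of_isProbabilityMeasure (ν := volume)
    (by fun_prop) hf0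
  obtain ⟨hui, hu1⟩ := integrable_and_integral_cumulativeHazard_mul (by fun_prop) hfi
    (fun x => exp_pos _) hmass
  have hu := convexOn_cumulativeHazard hg hfi
  have h := hu.map_integral_le (hu.continuousOn isOpen_univ) isClosed_univ
    (ae_of_all _ fun _ => mem_univ _)
    ((integrable_withDensity_ofReal_iff (by fun_prop) hf0).2 (integrable_mul_exp_neg hg hfi hmass))
    ((integrable_withDensity_ofReal_iff (by fun_prop) hf0).2 hui)
  rwa [integral_withDensity_ofReal (by fun_prop) hf0 (cumulativeHazard _), hu1] at h

end LogConcave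

theorem stmt2 (f g : ℝ → ℝ) (hg : ConvexOn ℝ Set.univ g)
    (hf : ∀ t, f t = Real.exp (-g t))
    (μ : Measure ℝ)
    (hμ : μ = MeasureTheory.volume.withDensity (fun x => ENNReal.ofReal (f x)))
    (hprob : IsProbabilityMeasure μ)
    (J Jinv : ℝ → ℝ) (hJ : ∀ t, J t = (μ (Set.Iic t)).toReal)
    (hJinv : ∀ y ∈ Set.Ioo (0:ℝ) 1, J (Jinv y) = y)
    (Eμ : ℝ) (hE : Eμ = ∫ x, x ∂μ)
    (a b n : ℝ) (ha : 0 < a) (hab : a < b) (hbn : b < n)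
    (hlog : 0 < Real.log n - Real.log b - 1) :
    (Jinv (1 - a/n) - Jinv (1 - b/n)) / (Jinv (1 - b/n) - Eμ)
      ≤ (Real.log b - Real.log a) / (Real.log n - Real.log b - 1) := by
  obtain rfl : f = fun t => exp (-g t) := funext hf
  subst hμ hE
  have hgc : Continuous g := continuousOn_univ.1 (hg.continuousOn isOpen_univ)
  obtain ⟨hfi, -⟩ := integrable_and_integral_eq_one_of_isProbabilityMeasure (ν := volume)
    (by fun_prop) fun t => (exp_pos (-g t)).le
  set u := cumulativeHazard fun t => exp (-g t)
  have hu_quantile : ∀ p, 0 < p → p < n → u (Jinv (1 - p / n)) = log n - log p := by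
    intro p hp hpn
    have hn : 0 < n := hp.trans hpn
    have hy : 1 - p / n ∈ Ioo (0:ℝ) 1 :=
      ⟨by linarith [(div_lt_one hn).2 hpn], by linarith [div_pos hp hn]⟩
    rw [show u _ = -log (tailIntegral _ _) from rfl,
      tailIntegral_eq_one_sub_measureReal_Iic (fun t => (exp_pos _).le) hfi, measureReal_def,
      ← hJ, hJinv _ hy, sub_sub_cancel, log_div hp.ne' hn.ne', neg_sub]
  have hua := hu_quantile a ha (hab.trans hbn)
  have hub := hu_quantile b (ha.trans hab) hbn
  have hmean := cumulativeHazard_integral_id_le_one hg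
  calc _ ≤ (u (Jinv (1 - a / n)) - u (Jinv (1 - b / n))) / (u (Jinv (1 - b / n)) - u _) :=
        (convexOn_cumulativeHazard hg hfi).sub_div_sub_le_of_monotone
          (strictMono_cumulativeHazard (by fun_prop) hfi fun x => exp_pos _).monotone
          (by linarith) (by linarith [log_lt_log ha hab])
    _ ≤ _ := by
        rw [hua, hub, sub_sub_sub_cancel_left]
        exact div_le_div_of_nonneg_left (sub_nonneg.2 (log_le_log ha hab.le)) hlog (by linarith)
end

section
/- Let K, L be convex bodies in ℝ^d with r B₂^d ⊆ K ⊆ R B₂^d, let 0 < ρ < 1/2, 0 < ε < r/(16R), and let N be an ε-net in S^{d-1}. If (1-ρ)‖ω‖_L ≤ ‖ω‖_K ≤ (1+ρ)‖ω‖_L for every ω ∈ N, then for all x ∈ ℝ^d, (1 + 2ρ + 28Rε/r)^{-1}‖x‖_L ≤ ‖x‖_K ≤ (1 + 2ρ + 28Rε/r)‖x‖_L. -/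
/-!
`gauge K` is `1/r`-Lipschitz because `r B₂ ⊆ K`. For `gauge L`, the net comparison gives
`gauge L ≤ 2/r` on `N`; if `gauge L ≤ c ‖·‖`, covering the sphere by the net improves this to
`(2/r + c ε) ‖·‖`, and iterating reaches the fixed point `2 / (r (1 - ε)) ≤ 4/r`. So passing from a
unit vector `θ` to a nearby `ω ∈ N` changes both gauges by `O(ε/r)`, a relative error `O(Rε/r)`
since `gauge K ≥ 1/R` on the sphere. Homogeneity extends the comparison from the sphere to all `x`.
-/

open Metric Filter Topology

section Gauge

variable {E : Type*} [NormedAddCommGroup E] [NormedSpace ℝ E] {s : Set E}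

theorem gauge_le_mul_of_forall_mem_sphere {g : E → ℝ} {c : ℝ}
    (hg : ∀ t : ℝ, 0 ≤ t → ∀ x, g (t • x) = t * g x)
    (h : ∀ θ ∈ sphere (0 : E) 1, gauge s θ ≤ c * g θ) (x : E) : gauge s x ≤ c * g x := by
  rcases eq_or_ne x 0 with rfl | hx
  · have hg0 : g 0 = 0 := by simpa using hg 0 le_rfl 0
    simp [hg0]
  have hx' : x = ‖x‖ • (‖x‖⁻¹ • x) := by
    rw [smul_smul, mul_inv_cancel₀ (norm_ne_zero_iff.2 hx), one_smul]
  have hθ : ‖x‖⁻¹ • x ∈ sphere (0 : E) 1 := by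
    simpa using norm_smul_inv_norm (𝕜 := ℝ) hx
  rw [hx', gauge_smul_of_nonneg (norm_nonneg x), hg _ (norm_nonneg x), smul_eq_mul,
    mul_left_comm]
  exact mul_le_mul_of_nonneg_left (h _ hθ) (norm_nonneg x)

theorem gauge_le_inv_mul_norm {r : ℝ} (hr : 0 < r) (hs : closedBall (0 : E) r ⊆ s) (x : E) :
    gauge s x ≤ r⁻¹ * ‖x‖ :=
  (le_inv_mul_iff₀ hr).2 (mul_gauge_le_norm (ball_subset_closedBall.trans hs))

theorem one_le_mul_gauge_of_mem_sphere (hs : Absorbent ℝ s) {R : ℝ} (hR : 0 < R)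
    (hsR : s ⊆ closedBall 0 R) {θ : E} (hθ : θ ∈ sphere (0 : E) 1) : 1 ≤ R * gauge s θ := by
  have := le_gauge_of_subset_closedBall (x := θ) hs hR.le hsR
  rwa [mem_sphere_zero_iff_norm.1 hθ, div_le_iff₀' hR] at this

theorem gauge_le_add_mul_of_dist_le (hs : Convex ℝ s) (hs₀ : s ∈ 𝓝 0) {c ε : ℝ} (hc₀ : 0 ≤ c)
    (hc : ∀ y, gauge s y ≤ c * ‖y‖) {x y : E} (hxy : dist x y ≤ ε) :
    gauge s x ≤ gauge s y + c * ε :=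
  calc gauge s x = gauge s (y + (x - y)) := by rw [add_sub_cancel]
    _ ≤ gauge s y + gauge s (x - y) := gauge_add_le hs (absorbent_nhds_zero hs₀) _ _
    _ ≤ gauge s y + c * ε := by
        rw [dist_eq_norm] at hxy
        gcongr
        exact (hc _).trans (by gcongr)

variable {N : Set E} {A ε : ℝ}

theorem gauge_le_add_mul_norm_of_net (hs : Convex ℝ s) (hs₀ : s ∈ 𝓝 0)
    (hcov : ∀ θ ∈ sphere (0 : E) 1, ∃ ω ∈ N, dist θ ω ≤ ε) (hN : ∀ ω ∈ N, gauge s ω ≤ A)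
    {c : ℝ} (hc₀ : 0 ≤ c) (hc : ∀ y, gauge s y ≤ c * ‖y‖) (x : E) :
    gauge s x ≤ (A + c * ε) * ‖x‖ := by
  refine gauge_le_mul_of_forall_mem_sphere (fun t ht y ↦ norm_smul_of_nonneg ht y) ?_ x
  intro θ hθ
  obtain ⟨ω, hω, hθω⟩ := hcov θ hθ
  rw [mem_sphere_zero_iff_norm.1 hθ, mul_one]
  linarith [gauge_le_add_mul_of_dist_le hs hs₀ hc₀ hc hθω, hN ω hω]

theorem gauge_le_div_one_sub_mul_norm_of_net (hs : Convex ℝ s) (hs₀ : s ∈ 𝓝 0)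
    (hcov : ∀ θ ∈ sphere (0 : E) 1, ∃ ω ∈ N, dist θ ω ≤ ε) (hN : ∀ ω ∈ N, gauge s ω ≤ A)
    (hA : 0 ≤ A) (hε₀ : 0 ≤ ε) (hε₁ : ε < 1) (x : E) :
    gauge s x ≤ A / (1 - ε) * ‖x‖ := by
  obtain ⟨δ, hδ, hδs⟩ := Metric.mem_nhds_iff.1 hs₀
  set M := A / (1 - ε)
  have hM : A + M * ε = M := by
    have : 1 - ε ≠ 0 := by linarith
    simp only [M]; field_simp; ring
  have iterate : ∀ n : ℕ, ∀ y, gauge s y ≤ (M + ε ^ n * δ⁻¹) * ‖y‖ := by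
    intro n
    induction n with
    | zero =>
      intro y
      calc gauge s y ≤ δ⁻¹ * ‖y‖ := (le_inv_mul_iff₀ hδ).2 (mul_gauge_le_norm hδs)
        _ ≤ (M + ε ^ 0 * δ⁻¹) * ‖y‖ := by
          gcongr; have : 0 ≤ M := div_nonneg hA (by linarith); simp [this]
    | succ n ih =>
      intro y
      calc gauge s y ≤ (A + (M + ε ^ n * δ⁻¹) * ε) * ‖y‖ :=
            gauge_le_add_mul_norm_of_net hs hs₀ hcov hN (by positivity) ih y
        _ = (M + ε ^ (n + 1) * δ⁻¹) * ‖y‖ := by linear_combination ‖y‖ * hM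
  have hlim : Tendsto (fun n : ℕ ↦ (M + ε ^ n * δ⁻¹) * ‖x‖) atTop (𝓝 ((M + 0 * δ⁻¹) * ‖x‖)) :=
    ((tendsto_pow_atTop_nhds_zero_of_lt_one hε₀ hε₁).mul_const _ |>.const_add M).mul_const _
  rw [zero_mul, add_zero] at hlim
  exact ge_of_tendsto' hlim fun n ↦ iterate n x

theorem gauge_le_four_inv_mul_norm_of_net {K L : Set E} {r ρ : ℝ} (hL : Convex ℝ L)
    (hL₀ : L ∈ 𝓝 0) (hr : 0 < r) (hK : ∀ y, gauge K y ≤ r⁻¹ * ‖y‖) (hρ : ρ ≤ 1 / 2)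
    (hε₀ : 0 ≤ ε) (hε₁ : ε ≤ 1 / 2) (hsub : N ⊆ sphere 0 1)
    (hcov : ∀ θ ∈ sphere (0 : E) 1, ∃ ω ∈ N, dist θ ω ≤ ε)
    (hnet : ∀ ω ∈ N, (1 - ρ) * gauge L ω ≤ gauge K ω) (x : E) :
    gauge L x ≤ 4 * r⁻¹ * ‖x‖ := by
  have hN : ∀ ω ∈ N, gauge L ω ≤ 2 * r⁻¹ := by
    intro ω hω
    have hKω : gauge K ω ≤ r⁻¹ := by
      simpa [mem_sphere_zero_iff_norm.1 (hsub hω)] using hK ω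
    nlinarith [hnet ω hω, gauge_nonneg (s := L) ω]
  calc gauge L x ≤ 2 * r⁻¹ / (1 - ε) * ‖x‖ :=
        gauge_le_div_one_sub_mul_norm_of_net hL hL₀ hcov hN (by positivity) hε₀ (by linarith) x
    _ ≤ 4 * r⁻¹ * ‖x‖ := by
        gcongr
        rw [div_le_iff₀ (by linarith)]
        nlinarith [inv_pos.2 hr]

end Gauge

section Transfer

variable {a a' b b' ρ R δ : ℝ}

theorem transfer_upper_bound (hρ₀ : 0 ≤ ρ) (hρ₁ : ρ ≤ 1 / 2) (hδ : 0 ≤ δ) (hRδ : R * δ ≤ 1 / 16)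
    (hR : 0 ≤ R) (hb : 0 ≤ b) (hRa' : 1 ≤ R * a') (hnet : a' ≤ (1 + ρ) * b')
    (haa' : a ≤ a' + δ) (hb'b : b' ≤ b + 4 * δ) :
    a ≤ (1 + 2 * ρ + 28 * R * δ) * b := by
  have hRb' : 2 ≤ 3 * (R * b') := by nlinarith [mul_le_mul_of_nonneg_left hnet hR]
  have hRb : 1 ≤ 4 * (R * b) := by nlinarith [mul_le_mul_of_nonneg_left hb'b hR]
  calc a ≤ (1 + ρ) * (b + 4 * δ) + δ := by nlinarith
    _ ≤ (1 + ρ) * b + 7 * δ := by nlinarith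
    _ ≤ (1 + 2 * ρ + 28 * R * δ) * b := by
        nlinarith [mul_le_mul_of_nonneg_left hRb hδ, mul_nonneg hρ₀ hb]

theorem transfer_lower_bound (hρ₀ : 0 ≤ ρ) (hρ₁ : ρ ≤ 1 / 2) (hδ : 0 ≤ δ) (ha : 0 ≤ a)
    (hRa : 1 ≤ R * a) (hnet : (1 - ρ) * b' ≤ a') (ha'a : a' ≤ a + δ) (hbb' : b ≤ b' + 4 * δ) :
    b ≤ (1 + 2 * ρ + 28 * R * δ) * a := by
  have h1ρ : 0 < 1 - ρ := by linarith
  have hRδa : δ ≤ R * δ * a := by nlinarith [mul_le_mul_of_nonneg_left hRa hδ]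
  refine le_of_mul_le_mul_left ?_ h1ρ
  calc (1 - ρ) * b ≤ a + 5 * δ := by nlinarith
    _ ≤ (1 - ρ) * (1 + 2 * ρ) * a + 14 * R * δ * a := by
        nlinarith [mul_nonneg (mul_nonneg hρ₀ (by linarith : 0 ≤ 1 - 2 * ρ)) ha]
    _ ≤ (1 - ρ) * ((1 + 2 * ρ + 28 * R * δ) * a) := by
        nlinarith [mul_nonneg (by linarith : 0 ≤ 1 - 2 * ρ) (hδ.trans hRδa)]

end Transfer

theorem gauge_le_mul_gauge_of_net_of_mem_sphere {E : Type*} [NormedAddCommGroup E]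
    [NormedSpace ℝ E] {K L N : Set E} {r R ρ ε : ℝ} (hK : Convex ℝ K) (hL : Convex ℝ L)
    (hL₀ : L ∈ 𝓝 0) (hr : 0 < r) (hR : 0 < R) (hKr : closedBall 0 r ⊆ K)
    (hKR : K ⊆ closedBall 0 R) (hρ₀ : 0 ≤ ρ) (hρ₁ : ρ ≤ 1 / 2) (hε₀ : 0 ≤ ε)
    (hRε : R * (r⁻¹ * ε) ≤ 1 / 16) (hsub : N ⊆ sphere 0 1)
    (hcov : ∀ θ ∈ sphere (0 : E) 1, ∃ ω ∈ N, dist θ ω ≤ ε)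
    (hnet : ∀ ω ∈ N, (1 - ρ) * gauge L ω ≤ gauge K ω ∧ gauge K ω ≤ (1 + ρ) * gauge L ω)
    {θ : E} (hθ : θ ∈ sphere (0 : E) 1) :
    gauge K θ ≤ (1 + 2 * ρ + 28 * R * (r⁻¹ * ε)) * gauge L θ ∧
      gauge L θ ≤ (1 + 2 * ρ + 28 * R * (r⁻¹ * ε)) * gauge K θ := by
  obtain ⟨ω, hωN, hθω⟩ := hcov θ hθ
  have hωθ : dist ω θ ≤ ε := dist_comm θ ω ▸ hθω
  have hK₀ : K ∈ 𝓝 0 := mem_of_superset (closedBall_mem_nhds 0 hr) hKr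
  have hKr' : ∀ y, gauge K y ≤ r⁻¹ * ‖y‖ := gauge_le_inv_mul_norm hr hKr
  have hKR' : ∀ {y}, y ∈ sphere (0 : E) 1 → 1 ≤ R * gauge K y :=
    one_le_mul_gauge_of_mem_sphere (absorbent_nhds_zero hK₀) hR hKR
  have hRr : 1 ≤ R * r⁻¹ := by
    have := hKr' θ
    rw [mem_sphere_zero_iff_norm.1 hθ, mul_one] at this
    nlinarith [hKR' hθ]
  have hL' : ∀ y, gauge L y ≤ 4 * r⁻¹ * ‖y‖ :=
    gauge_le_four_inv_mul_norm_of_net hL hL₀ hr hKr' hρ₁ hε₀ (by nlinarith) hsub hcov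
      fun ω hω ↦ (hnet ω hω).1
  have hKnear {x y : E} (h : dist x y ≤ ε) : gauge K x ≤ gauge K y + r⁻¹ * ε :=
    gauge_le_add_mul_of_dist_le hK hK₀ (by positivity) hKr' h
  have hLnear {x y : E} (h : dist x y ≤ ε) : gauge L x ≤ gauge L y + 4 * (r⁻¹ * ε) := by
    rw [← mul_assoc]; exact gauge_le_add_mul_of_dist_le hL hL₀ (by positivity) hL' h
  exact ⟨transfer_upper_bound hρ₀ hρ₁ (by positivity) hRε hR.le (gauge_nonneg _)
      (hKR' (hsub hωN)) (hnet ω hωN).2 (hKnear hθω) (hLnear hωθ),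
    transfer_lower_bound hρ₀ hρ₁ (by positivity) (gauge_nonneg _) (hKR' hθ) (hnet ω hωN).1
      (hKnear hωθ) (hLnear hθω)⟩

theorem stmt8_general (d : ℕ) (K L : Set (EuclideanSpace ℝ (Fin d)))
    (hKconv : Convex ℝ K)
    (hLconv : Convex ℝ L)
    (hL0 : (0 : EuclideanSpace ℝ (Fin d)) ∈ interior L)
    (r R : ℝ) (hr : 0 < r) (hR : 0 < R)
    (hKr : Metric.closedBall 0 r ⊆ K) (hKR : K ⊆ Metric.closedBall 0 R)
    (ρ ε : ℝ) (hρ₀ : 0 < ρ) (hρ₁ : ρ < 1/2) (hε₀ : 0 < ε) (hε₁ : ε < r / (16 * R))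
    (N : Set (EuclideanSpace ℝ (Fin d)))
    (hsub : N ⊆ Metric.sphere 0 1)
    (hcov : ∀ θ ∈ Metric.sphere (0 : EuclideanSpace ℝ (Fin d)) 1,
      ∃ ω ∈ N, dist θ ω ≤ ε)
    (hnet : ∀ ω ∈ N, (1 - ρ) * gauge L ω ≤ gauge K ω ∧ gauge K ω ≤ (1 + ρ) * gauge L ω) :
    ∀ x : EuclideanSpace ℝ (Fin d),
      (1 + 2 * ρ + 28 * R * ε / r)⁻¹ * gauge L x ≤ gauge K x ∧
      gauge K x ≤ (1 + 2 * ρ + 28 * R * ε / r) * gauge L x := by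
  intro x
  have hRε : R * (r⁻¹ * ε) ≤ 1 / 16 := by
    rw [lt_div_iff₀ (by positivity)] at hε₁
    field_simp
    linarith
  have hsphere := fun θ (hθ : θ ∈ sphere _ 1) ↦ gauge_le_mul_gauge_of_net_of_mem_sphere hKconv
    hLconv (mem_interior_iff_mem_nhds.1 hL0) hr hR hKr hKR hρ₀.le hρ₁.le hε₀.le hRε hsub hcov
    hnet hθ
  have hhom (s : Set (EuclideanSpace ℝ (Fin d))) (t : ℝ) (ht : 0 ≤ t) (y) :
      gauge s (t • y) = t * gauge s y := gauge_smul_of_nonneg ht y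
  rw [show 28 * R * ε / r = 28 * R * (r⁻¹ * ε) by ring, inv_mul_le_iff₀ (by positivity)]
  exact ⟨gauge_le_mul_of_forall_mem_sphere (hhom K) (fun θ hθ ↦ (hsphere θ hθ).2) x,
    gauge_le_mul_of_forall_mem_sphere (hhom L) (fun θ hθ ↦ (hsphere θ hθ).1) x⟩

theorem stmt8 (d : ℕ) (K L : Set (EuclideanSpace ℝ (Fin d)))
    (hKconv : Convex ℝ K) (hKcomp : IsCompact K)
    (hLconv : Convex ℝ L) (hLcomp : IsCompact L)
    (hL0 : (0 : EuclideanSpace ℝ (Fin d)) ∈ interior L)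
    (r R : ℝ) (hr : 0 < r) (hR : 0 < R)
    (hKr : Metric.closedBall 0 r ⊆ K) (hKR : K ⊆ Metric.closedBall 0 R)
    (ρ ε : ℝ) (hρ₀ : 0 < ρ) (hρ₁ : ρ < 1/2) (hε₀ : 0 < ε) (hε₁ : ε < r / (16 * R))
    (N : Set (EuclideanSpace ℝ (Fin d)))
    (hsub : N ⊆ Metric.sphere 0 1)
    (hcov : ∀ θ ∈ Metric.sphere (0 : EuclideanSpace ℝ (Fin d)) 1,
      ∃ ω ∈ N, dist θ ω ≤ ε)
    (hnet : ∀ ω ∈ N, (1 - ρ) * gauge L ω ≤ gauge K ω ∧ gauge K ω ≤ (1 + ρ) * gauge L ω) :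
    ∀ x : EuclideanSpace ℝ (Fin d),
      (1 + 2 * ρ + 28 * R * ε / r)⁻¹ * gauge L x ≤ gauge K x ∧
      gauge K x ≤ (1 + 2 * ρ + 28 * R * ε / r) * gauge L x :=
  stmt8_general d K L hKconv hLconv hL0 r R hr hR hKr hKR ρ ε hρ₀ hρ₁ hε₀ hε₁ N hsub hcov hnet
end

section
/- Let p > 1 and let μ be a p-log-concave probability measure on ℝ^d, i.e., with density f(x) = c·exp(-g(x)^p) where g ≥ 0 is convex and tends to ∞ at infinity. Then there exist c₁, c₂, t₀ > 0 such that for all unit vectors θ and all t ≥ t₀, μ({x : ⟨x,θ⟩ ≥ t}) ≤ c₁ t^{1-p} e^{-c₂ t^p}. -/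
/-! Convexity and `g → ∞` force linear growth, `g 0 + ‖x‖ / R ≤ g x` for `‖x‖ ≥ R`. On the
half-space `t ≤ ⟪x, θ⟫` we have `t ≤ ‖x‖`, so `g x ^ p ≥ (t / R) ^ p / 2 + ‖x‖ / (2 R)` and the
density is bounded there by `exp (-(t / R) ^ p / 2)` times the integrable function
`c * exp (-‖x‖ / (2 R))`. Giving up half of the exponent absorbs the factor `t ^ (1 - p)`. -/

open MeasureTheory Set Filter
open scoped RealInnerProductSpace

lemma Real.exp_neg_mul_le_one_add_rpow_neg {b s : ℝ} (hb : 0 < b) (hs : 0 ≤ s) (n : ℕ) :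
    Real.exp (-(b * s)) ≤ Real.exp b * n.factorial / b ^ n * (1 + s) ^ (-(n : ℝ)) := by
  have hbs : 0 < b * (1 + s) := by positivity
  calc Real.exp (-(b * s)) = Real.exp b / Real.exp (b * (1 + s)) := by
        rw [← Real.exp_sub]; ring_nf
    _ ≤ Real.exp b / ((b * (1 + s)) ^ n / n.factorial) := by
        gcongr; exact Real.pow_div_factorial_le_exp _ hbs.le n
    _ = Real.exp b * n.factorial / b ^ n * (1 + s) ^ (-(n : ℝ)) := by
        rw [Real.rpow_neg (by positivity), Real.rpow_natCast, mul_pow]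
        field_simp

lemma integrable_exp_neg_mul_norm {E : Type*} [NormedAddCommGroup E] [NormedSpace ℝ E]
    [FiniteDimensional ℝ E] [MeasurableSpace E] [BorelSpace E] (μ : Measure E)
    [μ.IsAddHaarMeasure] {b : ℝ} (hb : 0 < b) :
    Integrable (fun x : E => Real.exp (-(b * ‖x‖))) μ := by
  set n := Module.finrank ℝ E + 1
  refine ((integrable_one_add_norm (μ := μ) (r := n) (by simp [n])).const_mul
    (Real.exp b * n.factorial / b ^ n)).mono' (by fun_prop) (.of_forall fun x => ?_)
  rw [Real.norm_of_nonneg (Real.exp_pos _).le]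
  exact Real.exp_neg_mul_le_one_add_rpow_neg hb (norm_nonneg x) n

/-- Along the segment from `0` to `x`, `g` already gains `1` at distance `R₀` from the origin;
convexity scales this gain up by the factor `‖x‖ / R`. -/
lemma ConvexOn.eventually_add_norm_div_le {E : Type*} [NormedAddCommGroup E] [NormedSpace ℝ E]
    {g : E → ℝ} (hconv : ConvexOn ℝ univ g) (htend : Tendsto g (comap (‖·‖) atTop) atTop) :
    ∀ᶠ R in atTop, ∀ x : E, R ≤ ‖x‖ → g 0 + ‖x‖ / R ≤ g x := by
  obtain ⟨R₀, hR₀⟩ : ∃ R₀, ∀ y : E, R₀ ≤ ‖y‖ → g 0 + 1 ≤ g y := by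
    obtain ⟨R₀, hR₀⟩ := eventually_atTop.1 <| eventually_comap.1 <|
      htend.eventually (eventually_ge_atTop (g 0 + 1))
    exact ⟨R₀, fun y hy => hR₀ _ hy y rfl⟩
  filter_upwards [eventually_ge_atTop R₀, eventually_gt_atTop 0] with R hR₀R hR x hx
  have hxpos : 0 < ‖x‖ := hR.trans_le hx
  set l := R / ‖x‖
  have hl : 0 < l := div_pos hR hxpos
  have hl1 : l ≤ 1 := (div_le_one hxpos).2 hx
  have hseg : g (l • x) ≤ l * g x + (1 - l) * g 0 := by
    simpa using hconv.2 (mem_univ x) (mem_univ 0) hl.le (sub_nonneg.2 hl1) (by ring)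
  have hfar : g 0 + 1 ≤ g (l • x) := hR₀ _ (by
    rw [norm_smul, Real.norm_of_nonneg hl.le, div_mul_cancel₀ _ hxpos.ne']; exact hR₀R)
  have : 1 ≤ l * (g x - g 0) := by linarith
  rw [← le_sub_iff_add_le', ← one_div_div, div_le_iff₀ hl]
  linarith

lemma toReal_withDensity_ofReal_le {α : Type*} [MeasurableSpace α] {ν : Measure α} [SFinite ν]
    {f h : α → ℝ} (hh : Integrable h ν) (hh0 : 0 ≤ h) {s : Set α} {ε : ℝ} (hε : 0 ≤ ε)
    (hfs : ∀ x ∈ s, f x ≤ ε * h x) :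
    (ν.withDensity (fun x => ENNReal.ofReal (f x)) s).toReal ≤ ε * ∫ x, h x ∂ν := by
  have hεh : Integrable (fun x => ε * h x) ν := hh.const_mul ε
  refine ENNReal.toReal_le_of_le_ofReal (mul_nonneg hε (integral_nonneg hh0)) ?_
  calc ν.withDensity (fun x => ENNReal.ofReal (f x)) s
      = ∫⁻ x in s, ENNReal.ofReal (f x) ∂ν := withDensity_apply' _ s
    _ ≤ ∫⁻ x in s, ENNReal.ofReal (ε * h x) ∂ν :=
        setLIntegral_mono_ae hεh.aemeasurable.ennreal_ofReal.restrict
          (.of_forall fun x hx => ENNReal.ofReal_le_ofReal (hfs x hx))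
    _ ≤ ∫⁻ x, ENNReal.ofReal (ε * h x) ∂ν := setLIntegral_le_lintegral _ _
    _ = ENNReal.ofReal (ε * ∫ x, h x ∂ν) := by
        rw [← integral_const_mul, ofReal_integral_eq_lintegral_ofReal hεh
          (.of_forall fun x => mul_nonneg hε (hh0 x))]

/-- Splits the exponent `y ^ p` of the density into a tail part in `t` and an integrable part
in `s = ‖x‖`. -/
lemma Real.add_le_rpow_of_div_le {p R t s y : ℝ} (hp : 1 ≤ p) (hR : 0 < R) (ht : 0 ≤ t)
    (hts : t ≤ s) (hRs : R ≤ s) (hsy : s / R ≤ y) :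
    (2 * R ^ p)⁻¹ * t ^ p + (2 * R)⁻¹ * s ≤ y ^ p := by
  have hs : 1 ≤ s / R := (one_le_div hR).2 hRs
  have h₁ : (t / R) ^ p ≤ y ^ p :=
    Real.rpow_le_rpow (by positivity) ((div_le_div_of_nonneg_right hts hR.le).trans hsy)
      (by linarith)
  have h₂ : s / R ≤ y ^ p :=
    calc s / R ≤ y := hsy
      _ = y ^ (1 : ℝ) := (Real.rpow_one y).symm
      _ ≤ y ^ p := Real.rpow_le_rpow_of_exponent_le (hs.trans hsy) hp
  rw [Real.div_rpow ht hR.le] at h₁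
  calc (2 * R ^ p)⁻¹ * t ^ p + (2 * R)⁻¹ * s = t ^ p / R ^ p / 2 + s / R / 2 := by ring
    _ ≤ y ^ p := by linarith

/-- Half of the decay pays for the polynomial factor, through `exp (-u) ≤ u⁻¹`. -/
lemma Real.exp_neg_mul_rpow_le {a p t : ℝ} (ha : 0 < a) (ht : 1 ≤ t) :
    Real.exp (-(a * t ^ p)) ≤ 2 / a * t ^ (1 - p) * Real.exp (-(a / 2 * t ^ p)) := by
  have ht0 : 0 < t := by linarith
  have hu : 0 < a / 2 * t ^ p := by positivity
  have hexp : Real.exp (-(a / 2 * t ^ p)) ≤ 2 / a * t ^ (1 - p) :=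
    calc Real.exp (-(a / 2 * t ^ p)) ≤ (a / 2 * t ^ p)⁻¹ := by
          rw [Real.exp_neg]
          exact inv_anti₀ hu (by linarith [Real.add_one_le_exp (a / 2 * t ^ p)])
      _ = 2 / a * t ^ (-p) := by
          rw [Real.rpow_neg ht0.le]; field_simp
      _ ≤ 2 / a * t ^ (1 - p) := by
          gcongr 2 / a * ?_; exact Real.rpow_le_rpow_of_exponent_le ht (by linarith)
  calc Real.exp (-(a * t ^ p))
      = Real.exp (-(a / 2 * t ^ p)) * Real.exp (-(a / 2 * t ^ p)) := by
        rw [← Real.exp_add]; ring_nf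
    _ ≤ 2 / a * t ^ (1 - p) * Real.exp (-(a / 2 * t ^ p)) := by gcongr

theorem stmt11_general (d : ℕ) (p : ℝ) (hp : 1 < p)
    (g : EuclideanSpace ℝ (Fin d) → ℝ) (c : ℝ) (hc : 0 < c)
    (hg0 : ∀ x, 0 ≤ g x)
    (hgconv : ConvexOn ℝ Set.univ g)
    (hgtend : Filter.Tendsto g (Filter.comap (fun x => ‖x‖) Filter.atTop) Filter.atTop)
    (f : EuclideanSpace ℝ (Fin d) → ℝ)
    (hf : ∀ x, f x = c * Real.exp (-(g x ^ p)))
    (μ : Measure (EuclideanSpace ℝ (Fin d)))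
    (hμ : μ = MeasureTheory.volume.withDensity (fun x => ENNReal.ofReal (f x))) :
    ∃ c₁ c₂ t₀ : ℝ, 0 < c₁ ∧ 0 < c₂ ∧ 0 < t₀ ∧
      ∀ θ : EuclideanSpace ℝ (Fin d), ‖θ‖ = 1 → ∀ t : ℝ, t₀ ≤ t →
        (μ {x | t ≤ ⟪x, θ⟫}).toReal ≤ c₁ * t ^ (1 - p) * Real.exp (-(c₂ * t ^ p)) := by
  obtain ⟨R, hgrowth, hR⟩ :=
    ((hgconv.eventually_add_norm_div_le hgtend).and (eventually_ge_atTop 1)).exists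
  have hR0 : 0 < R := by linarith
  set h := fun x : EuclideanSpace ℝ (Fin d) => c * Real.exp (-((2 * R)⁻¹ * ‖x‖))
  have hh : Integrable h := (integrable_exp_neg_mul_norm volume (by positivity)).const_mul c
  have hh0 : 0 ≤ h := fun x => by positivity
  set a := (2 * R ^ p)⁻¹
  have ha : 0 < a := by positivity
  have hI : 0 ≤ ∫ x, h x := integral_nonneg hh0
  refine ⟨2 / a * ((∫ x, h x) + 1), a / 2, R, by positivity, by positivity, hR0, ?_⟩
  intro θ hθ t ht
  have ht0 : 0 < t := by linarith
  have hdensity : ∀ x ∈ {x | t ≤ ⟪x, θ⟫}, f x ≤ Real.exp (-(a * t ^ p)) * h x := by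
    intro x hx
    have htx : t ≤ ‖x‖ := hx.trans (by simpa [hθ] using real_inner_le_norm x θ)
    have hgx : ‖x‖ / R ≤ g x := by linarith [hgrowth x (ht.trans htx), hg0 0]
    rw [hf, mul_left_comm, ← Real.exp_add]
    gcongr
    linarith [Real.add_le_rpow_of_div_le hp.le hR0 ht0.le htx (ht.trans htx) hgx]
  calc (μ {x | t ≤ ⟪x, θ⟫}).toReal ≤ Real.exp (-(a * t ^ p)) * ∫ x, h x := by
        rw [hμ]; exact toReal_withDensity_ofReal_le hh hh0 (Real.exp_pos _).le hdensity
    _ ≤ 2 / a * t ^ (1 - p) * Real.exp (-(a / 2 * t ^ p)) * ((∫ x, h x) + 1) :=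
        mul_le_mul (Real.exp_neg_mul_rpow_le ha (hR.trans ht)) (by linarith) hI (by positivity)
    _ = 2 / a * ((∫ x, h x) + 1) * t ^ (1 - p) * Real.exp (-(a / 2 * t ^ p)) := by ring

theorem stmt11 (d : ℕ) (p : ℝ) (hp : 1 < p)
    (g : EuclideanSpace ℝ (Fin d) → ℝ) (c : ℝ) (hc : 0 < c)
    (hg0 : ∀ x, 0 ≤ g x)
    (hgconv : ConvexOn ℝ Set.univ g)
    (hgtend : Filter.Tendsto g (Filter.comap (fun x => ‖x‖) Filter.atTop) Filter.atTop)
    (f : EuclideanSpace ℝ (Fin d) → ℝ)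
    (hf : ∀ x, f x = c * Real.exp (-(g x ^ p)))
    (μ : Measure (EuclideanSpace ℝ (Fin d)))
    (hμ : μ = MeasureTheory.volume.withDensity (fun x => ENNReal.ofReal (f x)))
    (hprob : IsProbabilityMeasure μ) :
    ∃ c₁ c₂ t₀ : ℝ, 0 < c₁ ∧ 0 < c₂ ∧ 0 < t₀ ∧
      ∀ θ : EuclideanSpace ℝ (Fin d), ‖θ‖ = 1 → ∀ t : ℝ, t₀ ≤ t →
        (μ {x | t ≤ ⟪x, θ⟫}).toReal ≤ c₁ * t ^ (1 - p) * Real.exp (-(c₂ * t ^ p)) :=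
  stmt11_general d p hp g c hc hg0 hgconv hgtend f hf μ hμ
end

section
/- Let K, L ⊂ ℝ^d be convex bodies such that the John ellipsoid of K is the Euclidean unit ball B₂^d (so B₂^d ⊆ K ⊆ dB₂^d), and suppose there exist x, x' ∈ int(K ∩ L) and 0 < r < 1/(8d) with (1+r)^{-1}(K - x) + x ⊆ L ⊆ (1+r)(K - x') + x'. Then the Hausdorff distance satisfies d_H(K,L) ≤ 4dr, and the logarithmic Hausdorff distance satisfies d_L(K,L) ≤ 1 + 8dr. -/
/-!
A homothety with centre `c` and ratio `t` maps a convex set `S ⊇ closedBall 0 ρ` into `μ • S`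
once `|1 - t| * ‖c‖ ≤ (μ - t) * ρ`: the image point `t • k + (1 - t) • c` is a point of `t • S`
plus a point of `(μ - t) • closedBall 0 ρ`, and `t • S + (μ - t) • S = μ • S` by convexity.
With `‖x‖, ‖x'‖ ≤ d`, `B₂ ⊆ K` and `closedBall 0 (1/2) ⊆ L` (pull `B₂ ⊆ K` back through the
homothety), this gives `L ⊆ (1 + 8dr) • K` and `K ⊆ (1 + 8dr) • L`, centred at `0`.
For the Hausdorff distance, both homotheties move a point `k ∈ K` by at most
`r * dist c k ≤ r * diam K ≤ 2dr`.
-/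

open Metric Set AffineMap
open scoped Pointwise

section Homothety

variable {E : Type*} [NormedAddCommGroup E] [NormedSpace ℝ E]

theorem coe_homothety_eq_smul_sub_add (c : E) (t : ℝ) :
    ⇑(homothety c t) = fun y => t • (y - c) + c :=
  rfl

theorem homothety_inv_homothety {c : E} {t : ℝ} (ht : t ≠ 0) (p : E) :
    homothety c t⁻¹ (homothety c t p) = p := by
  rw [← homothety_mul_apply, inv_mul_cancel₀ ht, homothety_one, id_apply]

theorem subset_image_homothety_inv {K L : Set E} {c : E} {t : ℝ} (ht : t ≠ 0)
    (h : homothety c t '' K ⊆ L) : K ⊆ homothety c t⁻¹ '' L :=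
  fun k hk => ⟨homothety c t k, h (mem_image_of_mem _ hk), homothety_inv_homothety ht k⟩

theorem closedBall_subset_of_closedBall_subset_image_homothety {S : Set E} {c : E}
    {t ρ ρ' : ℝ} (ht : t ≠ 0) (h : closedBall (0 : E) ρ ⊆ homothety c t '' S)
    (hρ : |t| * ρ' + |1 - t| * ‖c‖ ≤ ρ) : closedBall (0 : E) ρ' ⊆ S := by
  intro w hw
  have hw' : homothety c t w ∈ closedBall 0 ρ := by
    rw [mem_closedBall_zero_iff] at hw ⊢
    calc ‖homothety c t w‖ = ‖t • w + (1 - t) • c‖ := by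
          rw [coe_homothety_eq_smul_sub_add]; congr 1; module
      _ ≤ |t| * ‖w‖ + |1 - t| * ‖c‖ := by
          simpa only [norm_smul, Real.norm_eq_abs] using norm_add_le (t • w) ((1 - t) • c)
      _ ≤ ρ := le_trans (by gcongr) hρ
  obtain ⟨s, hs, hsw⟩ := h hw'
  rwa [← homothety_inv_homothety ht w, ← hsw, homothety_inv_homothety ht]

theorem Convex.image_homothety_subset_smul {S : Set E} (hS : Convex ℝ S) {c : E}
    {ρ t μ : ℝ} (hρ : 0 ≤ ρ) (ht : 0 ≤ t) (htμ : t ≤ μ) (hball : closedBall (0 : E) ρ ⊆ S)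
    (hc : |1 - t| * ‖c‖ ≤ (μ - t) * ρ) : homothety c t '' S ⊆ μ • S := by
  rintro _ ⟨k, hk, rfl⟩
  have hv : (1 - t) • c ∈ (μ - t) • S := by
    refine smul_set_mono hball ?_
    rw [smul_closedBall _ _ hρ, smul_zero, mem_closedBall_zero_iff, norm_smul,
      Real.norm_eq_abs, Real.norm_eq_abs, abs_of_nonneg (sub_nonneg.2 htμ)]
    exact hc
  rw [show μ = t + (μ - t) by ring, hS.add_smul ht (sub_nonneg.2 htμ)]
  exact ⟨t • k, smul_mem_smul_set hk, _, hv, by rw [coe_homothety_eq_smul_sub_add]; module⟩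

theorem hausdorffDist_le_of_homothety_sandwich {K L : Set E} {x x' : E} {r : ℝ} (hr : 0 ≤ r)
    (hK : Bornology.IsBounded K) (hx : x ∈ K) (hx' : x' ∈ K)
    (h₁ : homothety x (1 + r)⁻¹ '' K ⊆ L) (h₂ : L ⊆ homothety x' (1 + r) '' K) :
    hausdorffDist K L ≤ r * diam K := by
  apply hausdorffDist_le_of_mem_dist (by positivity)
  · intro k hk
    refine ⟨_, h₁ (mem_image_of_mem _ hk), ?_⟩
    have hratio : ‖1 - (1 + r)⁻¹‖ ≤ r := by
      rw [show 1 - (1 + r)⁻¹ = r / (1 + r) by field_simp; ring,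
        Real.norm_of_nonneg (by positivity)]
      exact div_le_self hr (by linarith)
    rw [dist_self_homothety]
    exact mul_le_mul hratio (dist_le_diam_of_mem hK hx hk) dist_nonneg hr
  · intro y hy
    obtain ⟨k, hk, rfl⟩ := h₂ hy
    refine ⟨k, hk, ?_⟩
    rw [dist_homothety_self, sub_add_cancel_left, norm_neg, Real.norm_of_nonneg hr]
    exact mul_le_mul_of_nonneg_left (dist_le_diam_of_mem hK hx' hk) hr

end Homothety

theorem stmt15_general (d : ℕ) (hd : 0 < d)
    (K L : Set (EuclideanSpace ℝ (Fin d)))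
    (hKconv : Convex ℝ K)
    (hLconv : Convex ℝ L)
    (hKball : Metric.closedBall (0 : EuclideanSpace ℝ (Fin d)) 1 ⊆ K)
    (hKd : K ⊆ Metric.closedBall (0 : EuclideanSpace ℝ (Fin d)) d)
    (x x' : EuclideanSpace ℝ (Fin d))
    (hx : x ∈ interior K ∩ interior L) (hx' : x' ∈ interior K ∩ interior L)
    (r : ℝ) (hr₀ : 0 < r) (hr₁ : r < 1 / (8 * d))
    (h₁ : (fun y => (1 + r)⁻¹ • (y - x) + x) '' K ⊆ L)
    (h₂ : L ⊆ (fun y => (1 + r) • (y - x') + x') '' K) :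
    Metric.hausdorffDist K L ≤ 4 * d * r ∧
    ∃ z ∈ interior K ∩ interior L,
      (fun y => (1 + 8 * d * r)⁻¹ • (y - z) + z) '' L ⊆ K ∧
      K ⊆ (fun y => (1 + 8 * d * r) • (y - z) + z) '' L := by
  have hd1 : (1 : ℝ) ≤ d := by exact_mod_cast hd
  have hdr : d * r < 1 / 8 := by
    rw [lt_div_iff₀ (by positivity)] at hr₁
    linarith
  have hnorm : ∀ y ∈ K, ‖y‖ ≤ d := fun y hy => mem_closedBall_zero_iff.1 (hKd hy)
  have hxK : x ∈ K := interior_subset hx.1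
  have hx'K : x' ∈ K := interior_subset hx'.1
  have habs : |1 - (1 + r)| = r := by rw [sub_add_cancel_left, abs_neg, abs_of_pos hr₀]
  rw [← coe_homothety_eq_smul_sub_add] at h₁ h₂
  have hKL : K ⊆ homothety x (1 + r) '' L := by
    simpa only [inv_inv] using subset_image_homothety_inv (by positivity) h₁
  have hLball : closedBall (0 : EuclideanSpace ℝ (Fin d)) (1 / 2) ⊆ L :=
    closedBall_subset_of_closedBall_subset_image_homothety (by positivity)
      (hKball.trans hKL) (by rw [habs, abs_of_pos (by positivity)]; nlinarith [hnorm x hxK])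
  have hL_smul : L ⊆ (1 + 8 * d * r) • K :=
    h₂.trans (hKconv.image_homothety_subset_smul zero_le_one (by positivity) (by nlinarith)
      hKball (by rw [habs]; nlinarith [hnorm x' hx'K]))
  have hK_smul : K ⊆ (1 + 8 * d * r) • L :=
    hKL.trans (hLconv.image_homothety_subset_smul (by norm_num) (by positivity) (by nlinarith)
      hLball (by rw [habs]; nlinarith [hnorm x hxK]))
  refine ⟨?_, 0, ⟨interior_mono hKball ?_, interior_mono hLball ?_⟩, ?_, ?_⟩
  · calc hausdorffDist K L ≤ r * diam K :=
          hausdorffDist_le_of_homothety_sandwich hr₀.le (isBounded_closedBall.subset hKd) hxK hx'K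
            h₁ h₂
      _ ≤ r * (2 * d) := by
          gcongr
          exact (diam_mono hKd isBounded_closedBall).trans (diam_closedBall d.cast_nonneg)
      _ ≤ 4 * d * r := by nlinarith
  · exact mem_interior_iff_mem_nhds.2 (closedBall_mem_nhds _ one_pos)
  · exact mem_interior_iff_mem_nhds.2 (closedBall_mem_nhds _ one_half_pos)
  · simp only [sub_zero, add_zero]
    rw [image_smul, smul_set_subset_iff₀ (by positivity), inv_inv]
    exact hL_smul
  · simpa only [sub_zero, add_zero, image_smul] using hK_smul

theorem stmt15 (d : ℕ) (hd : 0 < d)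
    (K L : Set (EuclideanSpace ℝ (Fin d)))
    (hKconv : Convex ℝ K) (hKcomp : IsCompact K)
    (hLconv : Convex ℝ L) (hLcomp : IsCompact L)
    (hKball : Metric.closedBall (0 : EuclideanSpace ℝ (Fin d)) 1 ⊆ K)
    (hKd : K ⊆ Metric.closedBall (0 : EuclideanSpace ℝ (Fin d)) d)
    (x x' : EuclideanSpace ℝ (Fin d))
    (hx : x ∈ interior K ∩ interior L) (hx' : x' ∈ interior K ∩ interior L)
    (r : ℝ) (hr₀ : 0 < r) (hr₁ : r < 1 / (8 * d))
    (h₁ : (fun y => (1 + r)⁻¹ • (y - x) + x) '' K ⊆ L)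
    (h₂ : L ⊆ (fun y => (1 + r) • (y - x') + x') '' K) :
    Metric.hausdorffDist K L ≤ 4 * d * r ∧
    ∃ z ∈ interior K ∩ interior L,
      (fun y => (1 + 8 * d * r)⁻¹ • (y - z) + z) '' L ⊆ K ∧
      K ⊆ (fun y => (1 + 8 * d * r) • (y - z) + z) '' L :=
  stmt15_general d hd K L hKconv hLconv hKball hKd x x' hx hx' r hr₀ hr₁ h₁ h₂
end
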